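/- arXiv:2006.03779 — 4 statements merged into one kernel-verified Lean document; each statement's English description precedes it below -/
import Mathlib

section
/- Let G = (V, E) be a finite graph with maximum degree Δ and let m > 2Δ be a natural number. Then the set of proper m-colorings of G is nonempty, and if c is drawn uniformly at random from the proper m-colorings of G, then for any two distinct vertices x, y ∈ V the probability that c(x) = c(y) is at most 1/(m − 2Δ). -/
open Finset
open scoped Classical

noncomputable section

/-- Degree of a vertex `v` in the graph on `V` with edge set `E`: the number of edges
containing `v`. -/
def degE {V : Type*} [Fintype V] (E : Finset (Sym2 V)) (v : V) : ℕ :=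
  (E.filter (fun e => v ∈ e)).card

/-- Maximum degree of the graph with edge set `E`. -/
def maxDegE {V : Type*} [Fintype V] (E : Finset (Sym2 V)) : ℕ :=
  Finset.univ.sup (degE E)

/-- The finset of proper `m`-colorings of the graph on `V` with edge set `E`. -/
def properColorings {V : Type*} [Fintype V] (E : Finset (Sym2 V)) (m : ℕ) :
    Finset (V → Fin m) :=
  Finset.univ.filter (fun c => ∀ x y : V, s(x, y) ∈ E → c x ≠ c y)

section Aux

variable {V : Type*} [Fintype V] (E : Finset (Sym2 V))

lemma exists_notMem_of_card_lt {α : Type*} [Fintype α] (t : Finset α)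
    (h : t.card < Fintype.card α) : ∃ a, a ∉ t := by
  by_contra h'
  push_neg at h'
  have : (Finset.univ : Finset α).card ≤ t.card :=
    Finset.card_le_card (fun a _ => h' a)
  simp [Finset.card_univ] at this
  omega

/-- The number of neighbors of `a` within `s` is at most `degE E a`. -/
lemma card_nbrs_le (hE : ∀ e ∈ E, ¬ e.IsDiag) (a : V) (s : Finset V) :
    (s.filter (fun z => s(a, z) ∈ E)).card ≤ degE E a := by
  unfold degE
  apply Finset.card_le_card_of_injOn (fun z => s(a, z))
  · intro z hz
    simp only [Finset.mem_coe, Finset.mem_filter] at hz ⊢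
    exact ⟨hz.2, by simp⟩
  · intro z hz z' hz' hzz'
    simp only [Finset.coe_filter, Set.mem_setOf_eq] at hz hz'
    have hza : z ≠ a := by
      rintro rfl
      exact hE _ hz.2 (by simp [Sym2.isDiag_iff_proj_eq])
    rcases Sym2.eq_iff.mp hzz' with ⟨-, h⟩ | ⟨h1, h2⟩
    · exact h
    · exact absurd h2 hza

lemma degE_le_maxDegE (a : V) : degE E a ≤ maxDegE E :=
  Finset.le_sup (Finset.mem_univ a)

/-- Greedy coloring: nonemptiness. -/
lemma properColorings_nonempty (hE : ∀ e ∈ E, ¬ e.IsDiag) (m : ℕ)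
    (hm : maxDegE E < m) : (properColorings E m).Nonempty := by
  suffices h : ∀ s : Finset V, ∃ c : V → Fin m,
      ∀ u v, u ∈ s → v ∈ s → s(u, v) ∈ E → c u ≠ c v by
    obtain ⟨c, hc⟩ := h Finset.univ
    exact ⟨c, by
      simp only [properColorings, Finset.mem_filter, Finset.mem_univ, true_and]
      exact fun x y hxy => hc x y (Finset.mem_univ x) (Finset.mem_univ y) hxy⟩
  intro s
  induction s using Finset.induction with
  | empty => exact ⟨fun _ => ⟨0, lt_of_le_of_lt (Nat.zero_le _) hm⟩, by simp⟩
  | @insert a s ha ih =>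
    obtain ⟨c, hc⟩ := ih
    have hcard : ((s.filter (fun z => s(a, z) ∈ E)).image c).card < Fintype.card (Fin m) := by
      rw [Fintype.card_fin]
      calc ((s.filter (fun z => s(a, z) ∈ E)).image c).card
          ≤ (s.filter (fun z => s(a, z) ∈ E)).card := Finset.card_image_le
        _ ≤ degE E a := card_nbrs_le E hE a s
        _ ≤ maxDegE E := degE_le_maxDegE E a
        _ < m := hm
    obtain ⟨a0, ha0⟩ := exists_notMem_of_card_lt _ hcard
    refine ⟨Function.update c a a0, ?_⟩
    intro u v hu hv huv
    have hdiag : u ≠ v := by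
      intro h; subst h; exact hE _ huv (by simp [Sym2.isDiag_iff_proj_eq])
    rcases Finset.mem_insert.mp hu with hua | hu' <;>
      rcases Finset.mem_insert.mp hv with hva | hv'
    · exact absurd (hua.trans hva.symm) hdiag
    · have hvne : v ≠ a := fun h => ha (h ▸ hv')
      subst hua
      rw [Function.update_self, Function.update_of_ne hvne]
      intro h
      exact ha0 (Finset.mem_image.mpr ⟨v, Finset.mem_filter.mpr ⟨hv', huv⟩, h.symm⟩)
    · have hune : u ≠ a := fun h => ha (h ▸ hu')
      subst hva
      rw [Function.update_self, Function.update_of_ne hune]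
      intro h
      apply ha0
      refine Finset.mem_image.mpr ⟨u, Finset.mem_filter.mpr ⟨hu', ?_⟩, h⟩
      rwa [Sym2.eq_swap]
    · have hune : u ≠ a := fun h => ha (h ▸ hu')
      have hvne : v ≠ a := fun h => ha (h ▸ hv')
      rw [Function.update_of_ne hune, Function.update_of_ne hvne]
      exact hc u v hu' hv' huv

end Aux

/-- Key counting bound. -/
lemma key_count {V : Type*} [Fintype V] (E : Finset (Sym2 V))
    (hE : ∀ e ∈ E, ¬ e.IsDiag) (m : ℕ) (hm : 2 * maxDegE E < m)
    (x y : V) (hxy : x ≠ y) :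
    ((properColorings E m).filter (fun c => c x = c y)).card * (m - 2 * maxDegE E)
      ≤ (properColorings E m).card := by
  classical
  set S := properColorings E m with hS
  set F := S.filter (fun c => c x = c y) with hF
  set A : (V → Fin m) → Finset (Fin m) :=
    fun c => Finset.univ.filter (fun a => ∀ z, s(x, z) ∈ E → a ≠ c z) with hA
  -- each A c is large
  have hAcard : ∀ c, m - 2 * maxDegE E ≤ (A c).card := by
    intro c
    have hbad : (Finset.univ.filter (fun a : Fin m => ¬ ∀ z, s(x, z) ∈ E → a ≠ c z)).card
        ≤ maxDegE E := by
      have hsub : (Finset.univ.filter (fun a : Fin m => ¬ ∀ z, s(x, z) ∈ E → a ≠ c z))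
          ⊆ (Finset.univ.filter (fun z => s(x, z) ∈ E)).image c := by
        intro a ha
        simp only [Finset.mem_filter, Finset.mem_univ, true_and] at ha
        push_neg at ha
        obtain ⟨z, hz, haz⟩ := ha
        exact Finset.mem_image.mpr ⟨z, by simp [hz], haz.symm⟩
      calc _ ≤ ((Finset.univ.filter (fun z => s(x, z) ∈ E)).image c).card :=
            Finset.card_le_card hsub
        _ ≤ (Finset.univ.filter (fun z => s(x, z) ∈ E)).card := Finset.card_image_le
        _ ≤ degE E x := card_nbrs_le E hE x Finset.univ
        _ ≤ maxDegE E := degE_le_maxDegE E x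
    have hsplit := Finset.card_filter_add_card_filter_not
      (s := (Finset.univ : Finset (Fin m)))
      (p := fun a => ∀ z, s(x, z) ∈ E → a ≠ c z)
    simp only [Finset.card_univ, Fintype.card_fin] at hsplit
    have hAc : (A c).card
        = (Finset.univ.filter (fun a : Fin m => ∀ z, s(x, z) ∈ E → a ≠ c z)).card := by
      rw [hA]
    omega
  -- the recoloring map lands in S and is injective on the sigma set
  have himg : ∀ c ∈ F, ∀ a ∈ A c, Function.update c x a ∈ S := by
    intro c hc a haA
    have hcS : c ∈ S := Finset.mem_filter.mp hc |>.1
    have hcprop : ∀ u v : V, s(u, v) ∈ E → c u ≠ c v := by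
      have := Finset.mem_filter.mp hcS
      simpa [hS, properColorings] using this.2
    have haA' : ∀ z, s(x, z) ∈ E → a ≠ c z := by
      simpa [hA] using haA
    simp only [hS, properColorings, Finset.mem_filter, Finset.mem_univ, true_and]
    intro u v huv
    have hdiag : u ≠ v := fun h => hE _ (h ▸ huv) (by simp [Sym2.isDiag_iff_proj_eq, h])
    by_cases hu : u = x
    · subst hu
      have hv : v ≠ u := hdiag.symm
      rw [Function.update_self, Function.update_of_ne hv]
      exact haA' v huv
    · by_cases hv : v = x
      · subst hv
        rw [Function.update_self, Function.update_of_ne hu]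
        intro h
        exact haA' u (by rwa [Sym2.eq_swap]) h.symm
      · rw [Function.update_of_ne hu, Function.update_of_ne hv]
        exact hcprop u v huv
  have hinj : Set.InjOn (fun p : Σ _ : V → Fin m, Fin m => Function.update p.1 x p.2)
      (F.sigma (fun c => A c) : Finset _) := by
    intro p hp q hq hpq
    simp only [Finset.coe_sigma, Set.mem_sigma_iff, Finset.mem_coe] at hp hq
    have hpF : p.1 ∈ F := hp.1
    have hqF : q.1 ∈ F := hq.1
    have hpxy : p.1 x = p.1 y := (Finset.mem_filter.mp hpF).2
    have hqxy : q.1 x = q.1 y := (Finset.mem_filter.mp hqF).2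
    replace hpq : Function.update p.1 x p.2 = Function.update q.1 x q.2 := hpq
    have h1 : p.1 = q.1 := by
      funext z
      by_cases hz : z = x
      · subst hz
        have hy := congrFun hpq y
        rw [Function.update_of_ne (Ne.symm hxy), Function.update_of_ne (Ne.symm hxy)] at hy
        rw [hpxy, hqxy]; exact hy
      · have h := congrFun hpq z
        rwa [Function.update_of_ne hz, Function.update_of_ne hz] at h
    have h2 : p.2 = q.2 := by
      have h := congrFun hpq x
      rwa [Function.update_self, Function.update_self] at h
    exact Sigma.ext h1 (heq_of_eq h2)
  -- assemble
  have hcard_le : (F.sigma (fun c => A c)).card ≤ S.card := by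
    apply Finset.card_le_card_of_injOn (fun p => Function.update p.1 x p.2) _ hinj
    intro p hp
    rw [Finset.mem_coe, Finset.mem_sigma] at hp
    exact himg p.1 hp.1 p.2 hp.2
  have hcard_eq : (F.sigma (fun c => A c)).card = ∑ c ∈ F, (A c).card :=
    Finset.card_sigma _ _
  have hsum : F.card * (m - 2 * maxDegE E) ≤ ∑ c ∈ F, (A c).card := by
    calc F.card * (m - 2 * maxDegE E) = ∑ _c ∈ F, (m - 2 * maxDegE E) := by
          rw [Finset.sum_const, smul_eq_mul]
      _ ≤ ∑ c ∈ F, (A c).card := Finset.sum_le_sum (fun c _ => hAcard c)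
  omega

/-- Let `G = (V, E)` be a finite graph (edges are non-diagonal unordered
pairs) with maximum degree `Δ`, and let `m > 2Δ`.  Then the set of proper `m`-colorings of
`G` is nonempty, and for a coloring `c` drawn uniformly at random from the proper
`m`-colorings, for any two distinct vertices `x, y` the probability that `c x = c y` —
i.e. the fraction of proper `m`-colorings with `c x = c y` — is at most `1/(m − 2Δ)`. -/
theorem uniform_proper_coloring_collision_prob
    {V : Type*} [Fintype V] (E : Finset (Sym2 V)) (hE : ∀ e ∈ E, ¬ e.IsDiag)
    (m : ℕ) (hm : 2 * maxDegE E < m) :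
    (properColorings E m).Nonempty ∧
    ∀ x y : V, x ≠ y →
      (((properColorings E m).filter (fun c => c x = c y)).card : ℝ) /
          ((properColorings E m).card : ℝ)
        ≤ 1 / ((m : ℝ) - 2 * (maxDegE E : ℝ)) := by
  have hne : (properColorings E m).Nonempty :=
    properColorings_nonempty E hE m (by omega)
  refine ⟨hne, fun x y hxy => ?_⟩
  have hkey := key_count E hE m hm x y hxy
  have hSpos : (0 : ℝ) < (properColorings E m).card := by
    exact_mod_cast Finset.card_pos.mpr hne
  have hdpos : (0 : ℝ) < (m : ℝ) - 2 * (maxDegE E : ℝ) := by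
    have : (2 * maxDegE E : ℝ) < m := by exact_mod_cast hm
    linarith
  rw [div_le_div_iff₀ hSpos hdpos]
  have : (((properColorings E m).filter (fun c => c x = c y)).card : ℝ)
      * ((m : ℝ) - 2 * (maxDegE E : ℝ))
      ≤ ((properColorings E m).card : ℝ) := by
    have h2 : ((m - 2 * maxDegE E : ℕ) : ℝ) = (m : ℝ) - 2 * (maxDegE E : ℝ) := by
      have : 2 * maxDegE E ≤ m := le_of_lt hm
      push_cast [this]
      ring
    rw [← h2, ← Nat.cast_mul]
    exact_mod_cast hkey
  linarith

end
end

section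
/- Let G = (V, E) be a finite graph with maximum degree Δ, let m ≥ Δ + 1 be a natural number, and let x, y ∈ V be two distinct non-adjacent vertices with m > deg(x) + deg(y). If c is drawn uniformly at random from the proper m-colorings of G, then the probability that c(x) = c(y) is at most 1/(m − deg(x) − deg(y)). -/
open Finset
open scoped Classical

noncomputable section

/-- Let `G = (V, E)` be a finite graph (edges are non-diagonal unordered
pairs) with maximum degree `Δ`, let `m ≥ Δ + 1`, and let `x ≠ y` be two non-adjacent
vertices with `m > deg x + deg y`.  For a coloring `c` drawn uniformly at random from the
proper `m`-colorings of `G`, the probability that `c x = c y` — i.e. the fraction of proper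
`m`-colorings with `c x = c y` — is at most `1/(m − deg x − deg y)`. -/
theorem uniform_proper_coloring_collision_prob_nonadjacent
    {V : Type*} [Fintype V] (E : Finset (Sym2 V)) (hE : ∀ e ∈ E, ¬ e.IsDiag)
    (m : ℕ) (hm : maxDegE E + 1 ≤ m)
    (x y : V) (hxy : x ≠ y) (hnonadj : s(x, y) ∉ E)
    (hdeg : degE E x + degE E y < m) :
    (((properColorings E m).filter (fun c => c x = c y)).card : ℝ) /
        ((properColorings E m).card : ℝ)
      ≤ 1 / ((m : ℝ) - (degE E x : ℝ) - (degE E y : ℝ)) := by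
  classical
  set T := properColorings E m with hT
  set B := T.filter (fun c => c x = c y) with hB
  have hdy : degE E y < m := lt_of_le_of_lt (Nat.le_add_left _ _) hdeg
  -- neighbors of y
  set Ny : Finset V := Finset.univ.filter (fun u : V => s(u, y) ∈ E) with hNy
  have hNycard : Ny.card ≤ degE E y := by
    unfold degE
    apply Finset.card_le_card_of_injOn (fun u => s(u, y))
    · intro u hu
      simp only [hNy, Finset.mem_coe, Finset.mem_filter, Finset.mem_univ, true_and] at hu
      simp [hu]
    · intro u hu v hv h
      exact Sym2.congr_left.mp h
  -- extension sets
  set Sc : (V → Fin m) → Finset (V → Fin m) := fun c =>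
    (Finset.univ.filter (fun a : Fin m => ∀ u ∈ Ny, a ≠ c u)).image
      (fun a => Function.update c y a) with hSc
  have hScsub : ∀ c ∈ B, Sc c ⊆ T := by
    intro c hc d hd
    simp only [hSc, Finset.mem_image, Finset.mem_filter, Finset.mem_univ, true_and] at hd
    obtain ⟨a, ha, rfl⟩ := hd
    have hcT : c ∈ T := Finset.mem_of_mem_filter _ hc
    simp only [hT, properColorings, Finset.mem_filter, Finset.mem_univ, true_and] at hcT ⊢
    intro u v huv
    by_cases hu : u = y <;> by_cases hv : v = y
    · exact absurd huv (fun h => hE _ h (by simp [hu, hv]))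
    · subst hu
      rw [Function.update_self, Function.update_of_ne hv]
      refine ha v ?_
      simp only [hNy, Finset.mem_filter, Finset.mem_univ, true_and]
      rwa [Sym2.eq_swap] at huv
    · subst hv
      rw [Function.update_self, Function.update_of_ne hu]
      have : u ∈ Ny := by
        simp only [hNy, Finset.mem_filter, Finset.mem_univ, true_and]
        exact huv
      exact fun h => ha u this h.symm
    · rw [Function.update_of_ne hu, Function.update_of_ne hv]
      exact hcT u v huv
  have hSccard : ∀ c ∈ B, m - degE E y ≤ (Sc c).card := by
    intro c _
    have hinj : Function.Injective (fun a : Fin m => Function.update c y a) := by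
      intro a b h
      have := congrFun h y
      simpa using this
    rw [hSc]
    rw [Finset.card_image_of_injective _ hinj]
    have hsub : Finset.univ \ Ny.image c ⊆
        Finset.univ.filter (fun a : Fin m => ∀ u ∈ Ny, a ≠ c u) := by
      intro a ha
      simp only [Finset.mem_sdiff, Finset.mem_univ, true_and, Finset.mem_image] at ha
      simp only [Finset.mem_filter, Finset.mem_univ, true_and]
      intro u hu h
      exact ha ⟨u, hu, h.symm⟩
    calc m - degE E y ≤ m - (Ny.image c).card := by
          have : (Ny.image c).card ≤ degE E y :=
            le_trans (Finset.card_image_le) hNycard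
          omega
      _ ≤ (Finset.univ \ Ny.image c).card := by
          rw [Finset.card_sdiff_of_subset (Finset.subset_univ _)]
          simp
      _ ≤ _ := Finset.card_le_card hsub
  -- pairwise disjoint
  have hdisj : ∀ c ∈ B, ∀ c' ∈ B, c ≠ c' → Disjoint (Sc c) (Sc c') := by
    intro c hc c' hc' hne
    rw [Finset.disjoint_left]
    intro d hd hd'
    simp only [hSc, Finset.mem_image, Finset.mem_filter, Finset.mem_univ, true_and] at hd hd'
    obtain ⟨a, _, rfl⟩ := hd
    obtain ⟨a', _, he⟩ := hd'
    apply hne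
    have hcx : c x = c y := (Finset.mem_filter.mp hc).2
    have hcx' : c' x = c' y := (Finset.mem_filter.mp hc').2
    funext v
    by_cases hv : v = y
    · subst hv
      have hx := congrFun he x
      rw [Function.update_of_ne hxy, Function.update_of_ne hxy] at hx
      rw [← hcx, ← hcx']
      exact hx.symm
    · have := congrFun he v
      rw [Function.update_of_ne hv, Function.update_of_ne hv] at this
      exact this.symm
  have key : B.card * (m - degE E y) ≤ T.card := by
    calc B.card * (m - degE E y) = ∑ c ∈ B, (m - degE E y) := by
          rw [Finset.sum_const, smul_eq_mul]
      _ ≤ ∑ c ∈ B, (Sc c).card := Finset.sum_le_sum hSccard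
      _ = (B.biUnion Sc).card := (Finset.card_biUnion hdisj).symm
      _ ≤ T.card := Finset.card_le_card (Finset.biUnion_subset.mpr hScsub)
  -- now real arithmetic
  have hdx0 : (0:ℝ) ≤ (degE E x : ℝ) := Nat.cast_nonneg _
  have hpos : (0:ℝ) < (m : ℝ) - (degE E x : ℝ) - (degE E y : ℝ) := by
    have := hdeg
    push_cast
    have : ((degE E x + degE E y : ℕ) : ℝ) < (m : ℝ) := by exact_mod_cast hdeg
    push_cast at this
    linarith
  have hposY : (0:ℝ) < (m : ℝ) - (degE E y : ℝ) := by linarith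
  have hstep : ((B.card : ℝ)) / (T.card : ℝ) ≤ 1 / ((m : ℝ) - (degE E y : ℝ)) := by
    rcases Nat.eq_zero_or_pos T.card with h0 | hTpos
    · have hBsub : B ⊆ T := by rw [hB]; exact Finset.filter_subset _ _
      have hB0 : B.card = 0 := by
        have := Finset.card_le_card hBsub
        omega
      rw [hB0, h0]
      norm_num
      exact hdy.le
    · rw [div_le_div_iff₀ (by exact_mod_cast hTpos) hposY]
      have : (B.card : ℝ) * ((m : ℝ) - (degE E y : ℝ)) ≤ (T.card : ℝ) := by
        have := key
        have hcast : ((B.card * (m - degE E y) : ℕ) : ℝ) ≤ (T.card : ℝ) := by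
          exact_mod_cast key
        rwa [Nat.cast_mul, Nat.cast_sub hdy.le] at hcast
      linarith
  refine hstep.trans ?_
  apply one_div_le_one_div_of_le hpos
  linarith

end
end

section
/- Let μ be a probability measure on finite subsets of [D] and let T_1, …, T_n, T be n + 1 i.i.d. samples from μ. Then n · E[|K(T) \ E^(k)|] ≤ E[N^(k)], where N^(k) = Σ_{i=1}^n |K(T_i) \ E_i^(k)| and both E^(k) and the E_i^(k) are constructed from T_1, …, T_n; i.e., the Good-Turing-type estimator N^(k)/n upper bounds the expected count of unseen edges in expectation. -/
open MeasureTheory Finset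
open scoped Classical

noncomputable section

/-- `K T`: the edge set of the complete graph on the finite vertex set `T`, i.e. all
unordered pairs of distinct elements of `T`. -/
def completeEdges {D : ℕ} (T : Finset (Fin D)) : Finset (Sym2 (Fin D)) :=
  T.sym2.filter (fun e => ¬ e.IsDiag)

/-- The edge count `#(e)`: the number of indices `i ∈ [n]` with `e ∈ K (T i)`. -/
def edgeCount {D n : ℕ} (T : Fin n → Finset (Fin D)) (e : Sym2 (Fin D)) : ℕ :=
  (Finset.univ.filter (fun i => e ∈ completeEdges (T i))).card

/-- The leave-one-out edge count `#ᵢ(e)`: the number of indices `i' ≠ i` with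
`e ∈ K (T i')`. -/
def edgeCountLoo {D n : ℕ} (T : Fin n → Finset (Fin D)) (i : Fin n) (e : Sym2 (Fin D)) : ℕ :=
  ((Finset.univ.erase i).filter (fun j => e ∈ completeEdges (T j))).card

/-- The reduced co-occurrence edge set `E^(k) = {e ∈ ⋃ᵢ K(Tᵢ) : #(e) ≥ k}`. -/
def Ered {D n : ℕ} (k : ℕ) (T : Fin n → Finset (Fin D)) : Finset (Sym2 (Fin D)) :=
  (Finset.univ.biUnion (fun i => completeEdges (T i))).filter (fun e => k ≤ edgeCount T e)

/-- The leave-one-out reduced co-occurrence edge set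
`Eᵢ^(k) = {e ∈ ⋃_{i'≠i} K(Tᵢ') : #ᵢ(e) ≥ k}`. -/
def EredLoo {D n : ℕ} (k : ℕ) (T : Fin n → Finset (Fin D)) (i : Fin n) : Finset (Sym2 (Fin D)) :=
  ((Finset.univ.erase i).biUnion (fun j => completeEdges (T j))).filter
    (fun e => k ≤ edgeCountLoo T i e)

/-- The Good-Turing-type estimator `N^(k) = Σᵢ |K(Tᵢ) \ Eᵢ^(k)|`. -/
def Ngt {D n : ℕ} (k : ℕ) (T : Fin n → Finset (Fin D)) : ℕ :=
  ∑ i : Fin n, (completeEdges (T i) \ EredLoo k T i).card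

instance finsetFinMeasurableSpace {D : ℕ} : MeasurableSpace (Finset (Fin D)) := ⊤


instance {D : ℕ} : MeasurableSingletonClass (Finset (Fin D)) := ⟨fun _ => trivial⟩

/-- EredLoo only depends on coordinates other than `i`, and is contained in `Ered` of any
sample agreeing off `i`. -/
lemma edgeCountLoo_congr {D n : ℕ} (T T' : Fin n → Finset (Fin D)) (i : Fin n)
    (h : ∀ j, j ≠ i → T j = T' j) (e : Sym2 (Fin D)) :
    edgeCountLoo T i e = edgeCountLoo T' i e := by
  unfold edgeCountLoo
  congr 1
  apply Finset.filter_congr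
  intro j hj
  rw [h j (Finset.ne_of_mem_erase hj)]

lemma EredLoo_subset_Ered {D n : ℕ} (k : ℕ) (T : Fin n → Finset (Fin D)) (i : Fin n) :
    EredLoo k T i ⊆ Ered k T := by
  intro e he
  simp only [EredLoo, Ered, Finset.mem_filter, Finset.mem_biUnion] at he ⊢
  obtain ⟨⟨j, hj, hje⟩, hk⟩ := he
  refine ⟨⟨j, Finset.mem_univ j, hje⟩, le_trans hk ?_⟩
  exact Finset.card_le_card (Finset.filter_subset_filter _ (Finset.erase_subset _ _))

/-- Let `μ` be a probability measure on finite subsets of `[D]` and let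
`T₁, …, Tₙ, T` be `n + 1` i.i.d. samples from `μ` (modelled as the coordinates of the
product measure `μ^{⊗(n+1)}`; the first `n` coordinates are the training sample and the
last is the fresh test point).  Then `n · E[|K(T) \ E^(k)|] ≤ E[N^(k)]`, where both
`E^(k)` and the `Eᵢ^(k)` are constructed from `T₁, …, Tₙ` and
`N^(k) = Σᵢ |K(Tᵢ) \ Eᵢ^(k)|`: the Good-Turing-type estimator `N^(k)/n` upper bounds the
expected count of unseen edges in expectation. -/
theorem goodTuring_upper_bounds_unseen_edges
    {D n k : ℕ} (μ : Measure (Finset (Fin D))) [IsProbabilityMeasure μ] :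
    (n : ℝ) *
        ∫ ts : Fin (n + 1) → Finset (Fin D),
          ((completeEdges (ts (Fin.last n)) \
              Ered k (fun i : Fin n => ts i.castSucc)).card : ℝ)
          ∂(Measure.pi fun _ : Fin (n + 1) => μ)
      ≤ ∫ ts : Fin (n + 1) → Finset (Fin D),
          ((Ngt k (fun i : Fin n => ts i.castSucc) : ℝ))
          ∂(Measure.pi fun _ : Fin (n + 1) => μ) := by
  set π := (Measure.pi fun _ : Fin (n + 1) => μ)
  set G : (Fin (n + 1) → Finset (Fin D)) → ℝ := fun ts =>
    ((completeEdges (ts (Fin.last n)) \ Ered k (fun i : Fin n => ts i.castSucc)).card : ℝ)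
  set F : Fin n → (Fin (n + 1) → Finset (Fin D)) → ℝ := fun i ts =>
    ((completeEdges (ts i.castSucc) \ EredLoo k (fun j : Fin n => ts j.castSucc) i).card : ℝ)
  have key : ∀ i : Fin n, ∫ ts, G ts ∂π ≤ ∫ ts, F i ts ∂π := by
    intro i
    set σ : Fin (n + 1) ≃ Fin (n + 1) := Equiv.swap i.castSucc (Fin.last n)
    have hmp := measurePreserving_piCongrLeft (fun _ : Fin (n + 1) => μ) σ
    have heq : ∫ ts, G ts ∂π =
        ∫ ts, G ((MeasurableEquiv.piCongrLeft (fun _ => Finset (Fin D)) σ) ts) ∂π :=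
      (MeasurePreserving.integral_comp' hmp G).symm
    rw [heq]
    apply integral_mono (Integrable.of_finite) (Integrable.of_finite)
    intro ts
    have hcoe : ∀ j, (MeasurableEquiv.piCongrLeft (fun _ => Finset (Fin D)) σ) ts j
        = ts (σ j) := by
      intro j
      simp [MeasurableEquiv.piCongrLeft, Equiv.piCongrLeft, Equiv.piCongrLeft',
        Equiv.symm_symm, σ, Equiv.symm_swap]
      exact eq_rec_constant _ _
    have hne : i.castSucc ≠ Fin.last n := Fin.castSucc_lt_last i |>.ne
    have hlast : σ (Fin.last n) = i.castSucc := Equiv.swap_apply_right _ _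
    -- the swapped training sample
    set T' : Fin n → Finset (Fin D) := fun j => ts (σ j.castSucc)
    set T : Fin n → Finset (Fin D) := fun j => ts j.castSucc
    have hT' : ∀ j, j ≠ i → T' j = T j := by
      intro j hj
      have : σ j.castSucc = j.castSucc :=
        Equiv.swap_apply_of_ne_of_ne (by simpa using hj) (Fin.castSucc_lt_last j).ne
      simp [T', T, this]
    have hsub : EredLoo k T i ⊆ Ered k T' := by
      intro e he
      have : e ∈ EredLoo k T' i := by
        simp only [EredLoo, Finset.mem_filter, Finset.mem_biUnion] at he ⊢
        obtain ⟨⟨j, hj, hje⟩, hk⟩ := he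
        refine ⟨⟨j, hj, by rwa [hT' j (Finset.ne_of_mem_erase hj)]⟩, ?_⟩
        rwa [edgeCountLoo_congr T' T i hT']
      exact EredLoo_subset_Ered k T' i this
    show G _ ≤ F i ts
    simp only [G, F, hcoe, hlast]
    have : completeEdges (ts i.castSucc) \ Ered k T'
        ⊆ completeEdges (ts i.castSucc) \ EredLoo k T i :=
      Finset.sdiff_subset_sdiff (le_refl _) hsub
    exact_mod_cast Finset.card_le_card this
  calc (n : ℝ) * ∫ ts, G ts ∂π = ∑ _i : Fin n, ∫ ts, G ts ∂π := by
        simp [Finset.sum_const, nsmul_eq_mul]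
    _ ≤ ∑ i : Fin n, ∫ ts, F i ts ∂π := Finset.sum_le_sum fun i _ => key i
    _ = ∫ ts, ∑ i : Fin n, F i ts ∂π :=
        (integral_finset_sum _ fun i _ => Integrable.of_finite).symm
    _ = ∫ ts, ((Ngt k (fun i : Fin n => ts i.castSucc) : ℝ)) ∂π := by
        congr 1; funext ts; simp [Ngt, F]

end
end

section
/- Let G = (V, E) be a finite graph, let W ⊆ V be a set of held-out vertices, let G_f be the induced subgraph of G on V \ W with maximum degree Δ_f, and assume m > 2Δ_f. Construct a random coloring c of V as follows: the vertices of W receive |W| distinct colors from a palette disjoint from [m], and the vertices of V \ W receive a uniform proper m-coloring of G_f. Then c uses at most |W| + m colors, c is proper on the subgraph of G consisting of edges with both endpoints outside W together with all edges incident to W, and for any two distinct vertices x, y ∈ V the probability that c(x) = c(y) is zero unless both x, y ∈ V \ W, in which case it is at most 1/(m − 2Δ_f). -/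
open Finset
open scoped Classical

noncomputable section

/-- Degree of a vertex `v` in the subgraph of the graph with edge set `E` induced on the
complement of `W`: the number of edges containing `v` all of whose endpoints lie outside
`W`. -/
def degInduced {V : Type*} [Fintype V] (E : Finset (Sym2 V)) (W : Finset V) (v : V) : ℕ :=
  (E.filter (fun e => v ∈ e ∧ ∀ u ∈ e, u ∉ W)).card

/-- Maximum degree of the induced subgraph on the complement of `W`. -/
def maxDegInduced {V : Type*} [Fintype V] (E : Finset (Sym2 V)) (W : Finset V) : ℕ :=
  Finset.univ.sup (degInduced E W)

/-- The finset of proper `m`-colorings of the subgraph induced on the vertices outside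
`W`. -/
def properColoringsInduced {V : Type*} [Fintype V] (E : Finset (Sym2 V)) (W : Finset V)
    (m : ℕ) : Finset ({v : V // v ∉ W} → Fin m) :=
  Finset.univ.filter
    (fun d => ∀ a b : {v : V // v ∉ W}, s(a.1, b.1) ∈ E → d a ≠ d b)

/-- The combined coloring: vertices of `W` receive the held-out palette colors `cW`
(disjoint from `[m] = {0, …, m−1}`), and vertices outside `W` receive the colors of the
coloring `d` of the induced subgraph. -/
def combColoring {V : Type*} [Fintype V] {W : Finset V} {m : ℕ}
    (cW : {v : V // v ∈ W} → ℕ) (d : {v : V // v ∉ W} → Fin m) (v : V) : ℕ :=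
  if h : v ∈ W then cW ⟨v, h⟩ else (d ⟨v, h⟩ : ℕ)

lemma pc_count {V : Type*} [Fintype V] (E : Finset (Sym2 V))
    (hE : ∀ e ∈ E, ¬ e.IsDiag) (W : Finset V) (m : ℕ)
    (x y : {v : V // v ∉ W}) (hxy : x ≠ y) :
    ((properColoringsInduced E W m).filter (fun d => d x = d y)).card
      * (m - degInduced E W x.1) ≤ (properColoringsInduced E W m).card := by
  classical
  set S := properColoringsInduced E W m with hS
  set A := S.filter (fun d => d x = d y) with hA
  set nbrs : Finset {v : V // v ∉ W} := univ.filter (fun z => s(x.1, z.1) ∈ E) with hnb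
  have hnbrmem : ∀ z ∈ nbrs, s(x.1, z.1) ∈ E := by
    intro z hz; simpa [hnb] using hz
  have hnbrs : nbrs.card ≤ degInduced E W x.1 := by
    unfold degInduced
    apply Finset.card_le_card_of_injOn (fun z => s(x.1, z.1))
    · intro z hz
      have hzE := hnbrmem z hz
      refine mem_filter.mpr ⟨hzE, Sym2.mem_mk_left _ _, ?_⟩
      intro u hu
      rcases Sym2.mem_iff.mp hu with rfl | rfl
      · exact x.2
      · exact z.2
    · intro z1 h1 z2 h2 heq
      rcases Sym2.eq_iff.mp heq with ⟨-, h⟩ | ⟨hxz, hzx⟩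
      · exact Subtype.ext h
      · exfalso
        have : s(x.1, z1.1) ∈ E := hnbrmem z1 h1
        rw [hzx] at this
        exact hE _ this rfl
  -- good colors for a coloring d
  set good : ({v : V // v ∉ W} → Fin m) → Finset (Fin m) :=
    fun d => univ.filter (fun k => ∀ z ∈ nbrs, k ≠ d z) with hgood
  have hgoodcard : ∀ d, m - degInduced E W x.1 ≤ (good d).card := by
    intro d
    have h1 : (nbrs.image d)ᶜ ⊆ good d := by
      intro k hk
      simp only [mem_compl, mem_image, not_exists] at hk
      simp only [hgood, mem_filter, mem_univ, true_and]
      intro z hz hkz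
      exact hk z ⟨hz, hkz.symm⟩
    calc m - degInduced E W x.1 ≤ m - (nbrs.image d).card := by
          exact Nat.sub_le_sub_left (le_trans Finset.card_image_le hnbrs) m
      _ = ((nbrs.image d)ᶜ).card := by
          rw [Finset.card_compl, Fintype.card_fin]
      _ ≤ (good d).card := Finset.card_le_card h1
  have hsig : (A.sigma good).card ≤ S.card := by
    apply Finset.card_le_card_of_injOn (fun p => Function.update p.1 x p.2)
    · rintro ⟨d, k⟩ hp
      simp only [Finset.mem_coe, Finset.mem_sigma] at hp
      obtain ⟨hdA, hk⟩ := hp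
      have hdS : d ∈ S := Finset.mem_of_mem_filter _ hdA
      have hdprop : ∀ a b : {v : V // v ∉ W}, s(a.1, b.1) ∈ E → d a ≠ d b := by
        have := (Finset.mem_filter.mp hdS).2
        exact this
      have hkgood : ∀ z ∈ nbrs, k ≠ d z := by
        have := (Finset.mem_filter.mp hk).2
        exact this
      simp only [Finset.mem_coe, hS, properColoringsInduced, Finset.mem_filter, Finset.mem_univ, true_and]
      intro a b hab
      by_cases ha : a = x
      · by_cases hb : b = x
        · exfalso
          apply hE _ hab
          rw [ha, hb]
          exact Sym2.mk_isDiag_iff.mpr rfl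
        · rw [ha, Function.update_self, Function.update_of_ne hb]
          apply hkgood
          simp only [hnb, mem_filter, mem_univ, true_and]
          rw [← ha]; exact hab
      · by_cases hb : b = x
        · rw [hb, Function.update_self, Function.update_of_ne ha]
          intro h
          apply hkgood a ?_ h.symm
          simp only [hnb, mem_filter, mem_univ, true_and]
          rw [Sym2.eq_swap, ← hb]; exact hab
        · rw [Function.update_of_ne ha, Function.update_of_ne hb]
          exact hdprop a b hab
    · rintro ⟨d1, k1⟩ hp1 ⟨d2, k2⟩ hp2 heq
      dsimp only at heq
      have hp1' := Finset.mem_coe.mp hp1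
      have hp2' := Finset.mem_coe.mp hp2
      have hd1 : d1 x = d1 y := (Finset.mem_filter.mp (Finset.mem_sigma.mp hp1').1).2
      have hd2 : d2 x = d2 y := (Finset.mem_filter.mp (Finset.mem_sigma.mp hp2').1).2
      have hk : k1 = k2 := by
        have := congrFun heq x
        rwa [Function.update_self, Function.update_self] at this
      have hdy : d1 y = d2 y := by
        have := congrFun heq y
        rwa [Function.update_of_ne (Ne.symm hxy), Function.update_of_ne (Ne.symm hxy)] at this
      have hd : d1 = d2 := by
        funext z
        by_cases hz : z = x
        · subst hz; rw [hd1, hd2, hdy]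
        · have := congrFun heq z
          simpa [Function.update_of_ne hz] using this
      subst hd; subst hk; rfl
  calc A.card * (m - degInduced E W x.1)
      = A.card • (m - degInduced E W x.1) := by rw [smul_eq_mul]
    _ ≤ ∑ d ∈ A, (good d).card :=
        Finset.card_nsmul_le_sum A _ _ (fun d _ => hgoodcard d)
    _ = (A.sigma good).card := (Finset.card_sigma _ _).symm
    _ ≤ S.card := hsig

lemma combColoring_pos {V : Type*} [Fintype V] {W : Finset V} {m : ℕ}
    (cW : {v : V // v ∈ W} → ℕ) (d : {v : V // v ∉ W} → Fin m) {v : V} (h : v ∈ W) :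
    combColoring cW d v = cW ⟨v, h⟩ := by simp [combColoring, h]

lemma combColoring_neg {V : Type*} [Fintype V] {W : Finset V} {m : ℕ}
    (cW : {v : V // v ∈ W} → ℕ) (d : {v : V // v ∉ W} → Fin m) {v : V} (h : v ∉ W) :
    combColoring cW d v = (d ⟨v, h⟩ : ℕ) := by simp [combColoring, h]

/-- Let `G = (V, E)` be a finite graph (edges non-diagonal), `W ⊆ V` a
set of held-out vertices, `G_f` the induced subgraph on `V \ W` with maximum degree `Δ_f`,
and `m > 2Δ_f`.  Color `V` by giving the vertices of `W` distinct colors `cW` from a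
palette disjoint from `[m]` (i.e. `cW` injective with values `≥ m`), and the vertices of
`V \ W` a uniform proper `m`-coloring `d` of `G_f`.  Then: (i) the combined coloring uses
at most `|W| + m` colors; (ii) it is proper on the subgraph of `G` consisting of the edges
with both endpoints outside `W` together with all edges incident to `W`; and (iii) for any
two distinct vertices `x, y`, the probability (fraction of proper `m`-colorings `d` of
`G_f`) that they receive equal colors is zero unless both `x, y ∉ W`, in which case it is
at most `1/(m − 2Δ_f)`. -/
theorem heldOut_uniform_coloring_properties
    {V : Type*} [Fintype V] (E : Finset (Sym2 V)) (hE : ∀ e ∈ E, ¬ e.IsDiag)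
    (W : Finset V) (m : ℕ) (hm : 2 * maxDegInduced E W < m)
    (cW : {v : V // v ∈ W} → ℕ) (hcWinj : Function.Injective cW)
    (hcWpal : ∀ w, m ≤ cW w) :
    (∀ d ∈ properColoringsInduced E W m,
        (Finset.univ.image (combColoring cW d)).card ≤ W.card + m) ∧
    (∀ d ∈ properColoringsInduced E W m, ∀ x y : V, s(x, y) ∈ E →
        ((x ∉ W ∧ y ∉ W) ∨ x ∈ W ∨ y ∈ W) →
        combColoring cW d x ≠ combColoring cW d y) ∧
    (∀ x y : V, x ≠ y →
      (¬(x ∉ W ∧ y ∉ W) →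
        ((properColoringsInduced E W m).filter
            (fun d => combColoring cW d x = combColoring cW d y)).card = 0) ∧
      (x ∉ W → y ∉ W →
        (((properColoringsInduced E W m).filter
              (fun d => combColoring cW d x = combColoring cW d y)).card : ℝ) /
            ((properColoringsInduced E W m).card : ℝ)
          ≤ 1 / ((m : ℝ) - 2 * (maxDegInduced E W : ℝ)))) := by
  classical
  have hne2 : ∀ {a b : V} (ha : a ∈ W) (hb : b ∉ W) (d : {v : V // v ∉ W} → Fin m),
      combColoring cW d a ≠ combColoring cW d b := by
    intro a b ha hb d
    have h1 : combColoring cW d a = cW ⟨a, ha⟩ := combColoring_pos cW d ha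
    have h2 : combColoring cW d b = (d ⟨b, hb⟩ : ℕ) := combColoring_neg cW d hb
    have h3 := hcWpal ⟨a, ha⟩
    have h4 := (d ⟨b, hb⟩).isLt
    omega
  refine ⟨?_, ?_, ?_⟩
  · -- (i) at most |W| + m colors
    intro d _
    have hsub : Finset.univ.image (combColoring cW d) ⊆
        (W.attach.image cW) ∪ (Finset.range m) := by
      intro c hc
      simp only [mem_image, mem_univ, true_and] at hc
      obtain ⟨v, rfl⟩ := hc
      by_cases hv : v ∈ W
      · exact mem_union_left _ (mem_image.mpr ⟨⟨v, hv⟩, W.mem_attach _,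
          (combColoring_pos cW d hv).symm⟩)
      · apply mem_union_right
        rw [mem_range]
        have : combColoring cW d v = (d ⟨v, hv⟩ : ℕ) := combColoring_neg cW d hv
        rw [this]
        exact (d ⟨v, hv⟩).isLt
    calc (Finset.univ.image (combColoring cW d)).card
        ≤ ((W.attach.image cW) ∪ (Finset.range m)).card := Finset.card_le_card hsub
      _ ≤ (W.attach.image cW).card + (Finset.range m).card := Finset.card_union_le _ _
      _ ≤ W.card + m := by
          have := Finset.card_image_le (s := W.attach) (f := cW)
          simp only [Finset.card_attach] at this
          simp only [Finset.card_range]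
          omega
  · -- (ii) properness
    intro d hd x y hxyE _
    have hxny : x ≠ y := fun h => hE _ hxyE (by rw [h]; exact Sym2.mk_isDiag_iff.mpr rfl)
    by_cases hx : x ∈ W
    · by_cases hy : y ∈ W
      · rw [combColoring_pos cW d hx, combColoring_pos cW d hy]
        intro h
        exact hxny (congrArg Subtype.val (hcWinj h))
      · exact hne2 hx hy d
    · by_cases hy : y ∈ W
      · exact fun h => hne2 hy hx d h.symm
      · have hprop := (Finset.mem_filter.mp hd).2
        have := hprop ⟨x, hx⟩ ⟨y, hy⟩ hxyE
        rw [combColoring_neg cW d hx, combColoring_neg cW d hy]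
        exact fun h => this (Fin.val_injective h)
  · -- (iii)
    intro x y hxy
    constructor
    · intro hnot
      rw [Finset.card_eq_zero, Finset.filter_eq_empty_iff]
      intro d _
      by_cases hx : x ∈ W
      · by_cases hy : y ∈ W
        · rw [combColoring_pos cW d hx, combColoring_pos cW d hy]
          exact fun h => hxy (congrArg Subtype.val (hcWinj h))
        · exact hne2 hx hy d
      · by_cases hy : y ∈ W
        · exact fun h => hne2 hy hx d h.symm
        · exact absurd ⟨hx, hy⟩ hnot
    · intro hx hy
      set S := properColoringsInduced E W m with hS
      set Δ := maxDegInduced E W with hΔ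
      have hfilter : S.filter (fun d => combColoring cW d x = combColoring cW d y)
          = S.filter (fun d => d ⟨x, hx⟩ = d ⟨y, hy⟩) := by
        apply Finset.filter_congr
        intro d _
        rw [combColoring_neg cW d hx, combColoring_neg cW d hy]
        exact ⟨fun h => Fin.val_injective h, fun h => congrArg _ h⟩
      rw [hfilter]
      have hxy' : (⟨x, hx⟩ : {v : V // v ∉ W}) ≠ ⟨y, hy⟩ :=
        fun h => hxy (congrArg Subtype.val h)
      have hcount := pc_count E hE W m ⟨x, hx⟩ ⟨y, hy⟩ hxy'
      set A := S.filter (fun d => d ⟨x, hx⟩ = d ⟨y, hy⟩) with hAdef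
      have hdeg : degInduced E W x ≤ Δ := Finset.le_sup (Finset.mem_univ x)
      have hcount2 : A.card * (m - Δ) ≤ S.card :=
        le_trans (Nat.mul_le_mul_left _ (Nat.sub_le_sub_left hdeg m)) hcount
      have hΔm : Δ ≤ m := by omega
      have hgap : (0 : ℝ) < (m : ℝ) - 2 * Δ := by
        have : (2 * Δ : ℝ) < m := by exact_mod_cast hm
        linarith
      by_cases hScard : S.card = 0
      · have hA0 : A.card = 0 := by
          have : A ⊆ S := Finset.filter_subset _ _
          have := Finset.card_le_card this
          omega
        rw [hA0, hScard]
        simp only [Nat.cast_zero, zero_div]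
        exact one_div_nonneg.mpr hgap.le
      · have hSpos : (0 : ℝ) < S.card := by
          exact_mod_cast Nat.pos_of_ne_zero hScard
        rw [div_le_div_iff₀ hSpos hgap]
        have hcast : (A.card : ℝ) * ((m : ℝ) - Δ) ≤ S.card := by
          have := hcount2
          have h2 : ((A.card * (m - Δ) : ℕ) : ℝ) ≤ (S.card : ℝ) := by exact_mod_cast this
          rwa [Nat.cast_mul, Nat.cast_sub hΔm] at h2
        have hAnn : (0 : ℝ) ≤ A.card := Nat.cast_nonneg _
        have hΔnn : (0 : ℝ) ≤ Δ := Nat.cast_nonneg _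
        nlinarith

end
end
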